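/- Let θ > 0 and let (U_1,...,U_n) have density θ^{K_n(u)} min(u_1,...,u_n)^{θ−1} on [0,1]^n. Under this law, the distribution of the relative order of (U_1,...,U_n), viewed as a random permutation of [n], assigns to each permutation π a probability proportional to θ^{K(π')}, where K(π') is the number of lower records of π as a sequence (equivalently the number of cycles under the fundamental bijection). -/

import Mathlib

open MeasureTheory ProbabilityTheory
open scoped ENNReal

/-- The number of lower records of the finite sequence `u : Fin n → ℝ`
(index `0` always counts). -/
noncomputable def numRecords {n : ℕ} (u : Fin n → ℝ) : ℕ :=
  Nat.card {i : Fin n // ∀ j, j < i → u i < u j}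

/-- The law on `[0,1]^n` with density `θ^{K_n(u)} (min_i u_i)^{θ-1}` with respect to
Lebesgue measure, where `K_n(u)` is the number of lower records. -/
noncomputable def ewensLaw (n : ℕ) (θ : ℝ) : Measure (Fin n → ℝ) :=
  (volume.restrict (Set.univ.pi fun _ : Fin n => Set.Icc (0 : ℝ) 1)).withDensity
    fun u => ENNReal.ofReal (θ ^ numRecords u * (⨅ i, u i) ^ (θ - 1))

/-- The number of lower records of a permutation `π` of `[n]` read as the sequence
`(π 0, …, π (n-1))`; under the Foata fundamental bijection this is the number of cycles
of the corresponding permutation. -/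
noncomputable def numWordRecords {n : ℕ} (π : Equiv.Perm (Fin n)) : ℕ :=
  Nat.card {i : Fin n // ∀ j, j < i → π i < π j}

/-! Lower records depend only on relative order, so on the cell of tuples ordered like `ρ` the
density is `θ ^ K(ρ)` times `(min u) ^ (θ - 1)`. The second factor is invariant under permuting
coordinates, so all `n!` cells have the same mass `c` under it, and the cells cover the cube up
to a Lebesgue-null set. Hence `P(ρ) = θ ^ K(ρ) * c`, and `c` is fixed by
`∑ ρ, θ ^ K(ρ) = θ (θ + 1) ⋯ (θ + n - 1)`: inserting the largest letter into a word creates a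
new lower record exactly when it is inserted in front. -/

/-- Insert the largest value `Fin.last n` at position `k` into the word of `σ`. -/
def insPerm {n : ℕ} (k : Fin (n + 1)) (σ : Equiv.Perm (Fin n)) : Equiv.Perm (Fin (n + 1)) :=
  (finSuccEquiv' k).trans (σ.optionCongr.trans (finSuccEquiv' (Fin.last n)).symm)

@[simp] lemma insPerm_self {n : ℕ} (k : Fin (n + 1)) (σ : Equiv.Perm (Fin n)) :
    insPerm k σ k = Fin.last n := by
  simp [insPerm, finSuccEquiv'_at, finSuccEquiv'_symm_none]

@[simp] lemma insPerm_succAbove {n : ℕ} (k : Fin (n + 1)) (σ : Equiv.Perm (Fin n))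
    (j : Fin n) :
    insPerm k σ (k.succAbove j) = (σ j).castSucc := by
  simp [insPerm, finSuccEquiv'_succAbove, finSuccEquiv'_symm_some, Fin.succAbove_last]

lemma Fin.natCard_subtype_succAbove {n : ℕ} (p : Fin (n + 1) → Prop) [DecidablePred p]
    (k : Fin (n + 1)) :
    Nat.card {i // p i} = (if p k then 1 else 0) + Nat.card {j : Fin n // p (k.succAbove j)} := by
  classical
  simp only [Nat.card_eq_fintype_card, Fintype.card_subtype, Finset.card_filter]
  exact Fin.sum_univ_succAbove _ k

lemma insPerm_lowerRecord_succAbove_iff {n : ℕ} (k : Fin (n + 1)) (σ : Equiv.Perm (Fin n))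
    (j : Fin n) :
    (∀ m, m < k.succAbove j → insPerm k σ (k.succAbove j) < insPerm k σ m) ↔
      ∀ l, l < j → σ j < σ l := by
  rw [Fin.forall_iff_succAbove k]
  simp [Fin.succAbove_lt_succAbove_iff]

lemma insPerm_lowerRecord_self_iff {n : ℕ} (k : Fin (n + 1)) (σ : Equiv.Perm (Fin n)) :
    (∀ m, m < k → insPerm k σ k < insPerm k σ m) ↔ k = 0 := by
  refine ⟨fun h => ?_, ?_⟩
  · by_contra hk
    have h0 := h 0 (Fin.pos_of_ne_zero hk)
    rw [insPerm_self] at h0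
    exact h0.not_ge (Fin.le_last _)
  · rintro rfl m hm
    exact absurd hm (Fin.not_lt_zero m)

lemma numWordRecords_insPerm {n : ℕ} (k : Fin (n + 1)) (σ : Equiv.Perm (Fin n)) :
    numWordRecords (insPerm k σ) = (if k = 0 then 1 else 0) + numWordRecords σ := by
  classical
  rw [numWordRecords, Fin.natCard_subtype_succAbove _ k, numWordRecords,
    Nat.card_congr (Equiv.subtypeEquivRight (insPerm_lowerRecord_succAbove_iff k σ))]
  simp only [insPerm_lowerRecord_self_iff]

lemma insPerm_bijective (n : ℕ) :
    Function.Bijective fun p : Fin (n + 1) × Equiv.Perm (Fin n) => insPerm p.1 p.2 := by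
  refine (Fintype.bijective_iff_injective_and_card _).2
    ⟨?_, by simp [Fintype.card_perm, Nat.factorial_succ]⟩
  rintro ⟨k, σ⟩ ⟨k', σ'⟩ h
  dsimp only at h
  obtain rfl : k = k' := (insPerm k' σ').injective <| by
    rw [insPerm_self, ← insPerm_self k σ, h]
  refine Prod.ext rfl (Equiv.ext fun j => Fin.castSucc_injective n ?_)
  rw [← insPerm_succAbove k, ← insPerm_succAbove k, h]

theorem sum_pow_numWordRecords {R : Type*} [CommSemiring R] (θ : R) (n : ℕ) :
    ∑ π : Equiv.Perm (Fin n), θ ^ numWordRecords π = ∏ i ∈ Finset.range n, (θ + i) := by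
  induction n with
  | zero => simp [numWordRecords]
  | succ n ih =>
    rw [← (Equiv.ofBijective _ (insPerm_bijective n)).sum_comp, Fintype.sum_prod_type,
      Fin.sum_univ_succ, Finset.prod_range_succ, ← ih]
    simp only [Equiv.ofBijective_apply, numWordRecords_insPerm, ↓reduceIte, pow_add, pow_one,
      ← Finset.mul_sum, Fin.succ_ne_zero, zero_add, Finset.sum_const, Finset.card_univ,
      Fintype.card_fin, nsmul_eq_mul]
    ring

def orderCell {α : Type*} [LinearOrder α] {n : ℕ} (ρ : Equiv.Perm (Fin n)) : Set (Fin n → α) :=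
  {u | ∀ i j, u i < u j ↔ ρ i < ρ j}

section OrderCell

variable {α : Type*} [LinearOrder α] {n : ℕ} {ρ : Equiv.Perm (Fin n)} {u : Fin n → α}

lemma mem_orderCell_iff_strictMono : u ∈ orderCell ρ ↔ StrictMono (u ∘ ρ.symm) := by
  refine ⟨fun h a b hab => ?_, fun h i j => ?_⟩
  · exact (h _ _).2 (by simpa using hab)
  · simpa using h.lt_iff_lt (a := ρ i) (b := ρ j)

lemma symm_eq_sort_of_mem_orderCell (hu : u ∈ orderCell ρ) : ρ.symm = Tuple.sort u := by
  have hmono := mem_orderCell_iff_strictMono.1 hu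
  exact Tuple.eq_sort_iff.2 ⟨hmono.monotone, fun i j hij heq => absurd heq (hmono hij).ne⟩

lemma pairwise_disjoint_orderCell :
    Pairwise (Function.onFun Disjoint (orderCell : Equiv.Perm (Fin n) → Set (Fin n → α))) := by
  intro ρ ρ' hne
  refine Set.disjoint_left.2 fun u hu hu' => hne ?_
  simpa using congrArg Equiv.symm
    ((symm_eq_sort_of_mem_orderCell hu).trans (symm_eq_sort_of_mem_orderCell hu').symm)

lemma mem_iUnion_orderCell_of_injective (hu : Function.Injective u) :
    u ∈ ⋃ ρ : Equiv.Perm (Fin n), orderCell ρ :=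
  Set.mem_iUnion.2 ⟨(Tuple.sort u).symm, mem_orderCell_iff_strictMono.2 <|
    (Tuple.monotone_sort u).strictMono_of_injective (hu.comp (Equiv.injective _))⟩

lemma orderCell_eq_preimage (ρ : Equiv.Perm (Fin n)) :
    (orderCell ρ : Set (Fin n → α)) = (fun u => u ∘ ρ.symm) ⁻¹' orderCell 1 := by
  ext u
  rw [Set.mem_preimage, mem_orderCell_iff_strictMono, mem_orderCell_iff_strictMono]
  rfl

end OrderCell

lemma measurableSet_orderCell {n : ℕ} (ρ : Equiv.Perm (Fin n)) :
    MeasurableSet (orderCell ρ : Set (Fin n → ℝ)) := by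
  have : (orderCell ρ : Set (Fin n → ℝ)) = ⋂ i, ⋂ j, {u | u i < u j ↔ ρ i < ρ j} := by
    ext u; simp [orderCell]
  rw [this]
  exact .iInter fun i => .iInter fun j => measurableSet_setOfPred.2 <|
    (measurableSet_setOfPred.1 (measurableSet_lt (measurable_pi_apply i)
      (measurable_pi_apply j))).iff measurable_const

lemma volume_setOf_apply_eq_apply {ι : Type*} [Fintype ι] {i j : ι} (hij : i ≠ j) :
    volume {u : ι → ℝ | u i = u j} = 0 := by
  classical
  let L : (ι → ℝ) →ₗ[ℝ] ℝ :=
    LinearMap.proj (R := ℝ) (φ := fun _ : ι => ℝ) i - LinearMap.proj j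
  have hL : {u : ι → ℝ | u i = u j} = (LinearMap.ker L : Set (ι → ℝ)) := by
    ext u; simp [L, sub_eq_zero]
  rw [hL]
  refine Measure.addHaar_submodule _ _ fun htop => ?_
  have h := (htop ▸ Submodule.mem_top : Pi.single i 1 ∈ LinearMap.ker L)
  simp [L, hij.symm] at h

lemma volume_setOf_not_injective {ι : Type*} [Fintype ι] :
    volume {u : ι → ℝ | ¬ Function.Injective u} = 0 := by
  refine measure_mono_null (fun u hu => ?_) (measure_iUnion_null fun i : ι =>
    measure_iUnion_null fun j : ι => measure_iUnion_null fun hij : i ≠ j =>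
      volume_setOf_apply_eq_apply hij)
  obtain ⟨i, j, hu, hij⟩ := Function.not_injective_iff.1 hu
  exact Set.mem_iUnion₂.2 ⟨i, j, Set.mem_iUnion.2 ⟨hij, hu⟩⟩

theorem sum_measure_orderCell {n : ℕ} {ν : Measure (Fin n → ℝ)} (hν : ν ≪ volume) :
    ∑ ρ : Equiv.Perm (Fin n), ν (orderCell ρ) = ν Set.univ := by
  rw [← tsum_fintype (L := .unconditional _),
    ← measure_iUnion pairwise_disjoint_orderCell measurableSet_orderCell]
  refine measure_congr (ae_eq_univ.2 (hν (measure_mono_null ?_ volume_setOf_not_injective)))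
  exact fun u hu hinj => hu (mem_iUnion_orderCell_of_injective hinj)

lemma numRecords_eq_of_mem_orderCell {n : ℕ} {ρ : Equiv.Perm (Fin n)} {u : Fin n → ℝ}
    (hu : u ∈ orderCell ρ) : numRecords u = numWordRecords ρ :=
  Nat.card_congr <| Equiv.subtypeEquivRight fun i =>
    forall_congr' fun j => imp_congr_right fun _ => hu i j

theorem MeasureTheory.MeasurePreserving.withDensity_of_comp_eq {X : Type*} [MeasurableSpace X]
    {μ : Measure X} {T : X → X} (hT : MeasurePreserving T μ μ) (hTe : MeasurableEmbedding T)
    {f : X → ℝ≥0∞} (hf : ∀ x, f (T x) = f x) :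
    MeasurePreserving T (μ.withDensity f) (μ.withDensity f) := by
  refine ⟨hT.measurable, Measure.ext fun s hs => ?_⟩
  rw [Measure.map_apply hT.measurable hs, withDensity_apply _ (hT.measurable hs),
    withDensity_apply _ hs, ← hT.setLIntegral_comp_preimage_emb hTe f s]
  simp only [hf]

lemma measurePreserving_comp_perm {n : ℕ} (ρ : Equiv.Perm (Fin n)) :
    MeasurePreserving (fun u : Fin n → ℝ => u ∘ ρ) volume volume :=
  volume_preserving_arrowCongr' ρ.symm (MeasurableEquiv.refl ℝ) (.id volume)

lemma measurableEmbedding_comp_perm {n : ℕ} (ρ : Equiv.Perm (Fin n)) :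
    MeasurableEmbedding (fun u : Fin n → ℝ => u ∘ ρ) :=
  (MeasurableEquiv.arrowCongr' ρ.symm (MeasurableEquiv.refl ℝ)).measurableEmbedding

lemma measure_orderCell_eq_of_measurePreserving {n : ℕ} {ν : Measure (Fin n → ℝ)}
    (hν : ∀ ρ : Equiv.Perm (Fin n), MeasurePreserving (fun u : Fin n → ℝ => u ∘ ρ) ν ν)
    (ρ : Equiv.Perm (Fin n)) : ν (orderCell ρ) = ν (orderCell 1) := by
  rw [orderCell_eq_preimage,
    (hν ρ.symm).measure_preimage (measurableSet_orderCell 1).nullMeasurableSet]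

noncomputable def minPowLaw (n : ℕ) (θ : ℝ) : Measure (Fin n → ℝ) :=
  (volume.restrict (Set.univ.pi fun _ : Fin n => Set.Icc (0 : ℝ) 1)).withDensity
    fun u => ENNReal.ofReal ((⨅ i, u i) ^ (θ - 1))

lemma measurePreserving_minPowLaw_comp_perm {n : ℕ} (θ : ℝ) (ρ : Equiv.Perm (Fin n)) :
    MeasurePreserving (fun u : Fin n → ℝ => u ∘ ρ) (minPowLaw n θ) (minPowLaw n θ) := by
  have hcube : (fun u : Fin n → ℝ => u ∘ ρ) ⁻¹' Set.univ.pi (fun _ => Set.Icc 0 1) =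
      Set.univ.pi fun _ => Set.Icc 0 1 := by
    ext u
    simp only [Set.mem_preimage, Set.mem_univ_pi, Function.comp_apply]
    exact ρ.forall_congr_right (q := fun i => u i ∈ Set.Icc 0 1)
  refine MeasurePreserving.withDensity_of_comp_eq ?_ (measurableEmbedding_comp_perm ρ)
    fun u => by simp [ρ.surjective.iInf_comp u]
  have h := (measurePreserving_comp_perm ρ).restrict_preimage
    (MeasurableSet.univ_pi fun _ => measurableSet_Icc (a := (0 : ℝ)) (b := 1))
  rwa [hcube] at h

lemma ewensLaw_orderCell {n : ℕ} {θ : ℝ} (hθ : 0 ≤ θ) (ρ : Equiv.Perm (Fin n)) :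
    ewensLaw n θ (orderCell ρ) =
      ENNReal.ofReal (θ ^ numWordRecords ρ) * minPowLaw n θ (orderCell ρ) := by
  rw [ewensLaw, minPowLaw, withDensity_apply _ (measurableSet_orderCell ρ),
    withDensity_apply _ (measurableSet_orderCell ρ),
    ← lintegral_const_mul' _ _ ENNReal.ofReal_ne_top]
  refine setLIntegral_congr_fun (measurableSet_orderCell ρ) fun u hu => ?_
  rw [numRecords_eq_of_mem_orderCell hu, ENNReal.ofReal_mul (by positivity)]

lemma ewensLaw_absolutelyContinuous (n : ℕ) (θ : ℝ) : ewensLaw n θ ≪ volume :=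
  (withDensity_absolutelyContinuous _ _).trans Measure.absolutelyContinuous_restrict

/-- If `(U_1, …, U_n)` has density `θ^{K_n(u)} (min u)^{θ-1}` on `[0,1]^n`, then the
relative order of `(U_1, …, U_n)` (the rank sequence, viewed as a random permutation
of `[n]`) takes the value `π` with probability `θ^{K'(π)} / (θ)_n`, proportional to
`θ^{K'(π)}`, where `K'(π)` is the number of lower records of `π` as a sequence. -/
theorem relOrder_ewens_distribution (n : ℕ) (θ : ℝ) (hθ : 0 < θ)
    {Ω : Type*} [MeasurableSpace Ω] (μ : Measure Ω) [IsProbabilityMeasure μ]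
    (U : Fin n → Ω → ℝ) (hmeas : ∀ i, Measurable (U i))
    (hjoint : Measure.map (fun ω i => U i ω) μ = ewensLaw n θ) :
    ∀ π : Equiv.Perm (Fin n),
      μ {ω | ∀ i j : Fin n, U i ω < U j ω ↔ π i < π j}
        = ENNReal.ofReal (θ ^ numWordRecords π / ∏ i ∈ Finset.range n, (θ + i)) := by
  intro π
  have hU : Measurable fun ω i => U i ω := measurable_pi_lambda _ hmeas
  set c := minPowLaw n θ (orderCell 1)
  have hcell (ρ : Equiv.Perm (Fin n)) :
      ewensLaw n θ (orderCell ρ) = ENNReal.ofReal (θ ^ numWordRecords ρ) * c := by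
    rw [ewensLaw_orderCell hθ.le,
      measure_orderCell_eq_of_measurePreserving (measurePreserving_minPowLaw_comp_perm θ)]
  have hprob : ewensLaw n θ Set.univ = 1 := by
    rw [← hjoint, Measure.map_apply hU .univ, Set.preimage_univ, measure_univ]
  have hc : c * ENNReal.ofReal (∏ i ∈ Finset.range n, (θ + i)) = 1 := by
    rw [← hprob, ← sum_measure_orderCell (ewensLaw_absolutelyContinuous n θ),
      ← sum_pow_numWordRecords, ENNReal.ofReal_sum_of_nonneg fun ρ _ => by positivity,
      Finset.mul_sum]
    simp only [hcell, mul_comm]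
  calc μ {ω | ∀ i j : Fin n, U i ω < U j ω ↔ π i < π j}
      = ewensLaw n θ (orderCell π) := by
        rw [← hjoint, Measure.map_apply hU (measurableSet_orderCell π)]
        rfl
    _ = ENNReal.ofReal (θ ^ numWordRecords π) * c := hcell π
    _ = _ := by
        rw [ENNReal.eq_inv_of_mul_eq_one_left hc, ← div_eq_mul_inv,
          ENNReal.ofReal_div_of_pos (Finset.prod_pos fun i _ => by positivity)]
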